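/- (ZF) If (P, ≺) is a complete, dense, nonseparable linear order without endpoints satisfying the countable chain condition, and (P, ≺) admits a well-ordered separating family, then there exists a Suslin tree on ω₁. -/

import Mathlib

/-!
Choose by transfinite recursion, for each `t < ω₁`, an interval `[a t, b t]` with `a t < b t`
that contains none of the countably many earlier endpoints; nonseparability is exactly what makes
this possible. For `s < t` the open intervals are then either disjoint or the later one is strictly
nested in the earlier one, so strict nesting is a tree order on `ω₁`. An antichain gives pairwise
disjoint open intervals, and along a chain the left endpoints increase, so that consecutive ones
span pairwise disjoint intervals; by ccc both are countable. The level of a node is its rank.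
-/

/-- The ordinals below `ω₁`, the underlying set of trees on `ω₁`. -/
def Omega1 : Type 1 := {o : Ordinal // o < (Cardinal.aleph 1).ord}

noncomputable instance : LinearOrder Omega1 := Subtype.instLinearOrder _

/-- A Suslin tree on `ω₁`: a tree order on the set of countable ordinals
(with level function `lvl` recording the order type of the predecessors),
of height `ω₁`, with countable levels, no uncountable chain and no
uncountable antichain. -/
def IsSuslinTree (prec : Omega1 → Omega1 → Prop) (lvl : Omega1 → Ordinal) : Prop :=
  (∀ t, ¬ prec t t) ∧
  (∀ s t u, prec s t → prec t u → prec s u) ∧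
  (∀ t s s', prec s t → prec s' t → s = s' ∨ prec s s' ∨ prec s' s) ∧
  (∀ s t, prec s t → lvl s < lvl t) ∧
  (∀ t β, β < lvl t → ∃ s, prec s t ∧ lvl s = β) ∧
  (∀ α : Ordinal, {t : Omega1 | lvl t = α}.Countable) ∧
  (∀ α : Ordinal, α < (Cardinal.aleph 1).ord → ∃ t, lvl t = α) ∧
  (∀ t, lvl t < (Cardinal.aleph 1).ord) ∧
  (∀ C : Set Omega1, (∀ x ∈ C, ∀ y ∈ C, x = y ∨ prec x y ∨ prec y x) → C.Countable) ∧
  (∀ A : Set Omega1,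
    (∀ x ∈ A, ∀ y ∈ A, x ≠ y → ¬ prec x y ∧ ¬ prec y x) → A.Countable)

open Set Function

theorem Ordinal.countable_Iio_of_lt_ord_aleph_one {o : Ordinal.{0}}
    (h : o < (Cardinal.aleph 1).ord) : (Iio o).Countable := by
  rwa [← Cardinal.le_aleph0_iff_set_countable, Cardinal.mk_Iio_ordinal, Cardinal.lift_le_aleph0,
    ← Cardinal.lt_aleph_one_iff, ← Cardinal.lt_ord]

namespace Omega1

instance : WellFoundedLT Omega1 :=
  inferInstanceAs (WellFoundedLT {o : Ordinal.{0} // o < (Cardinal.aleph 1).ord})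

instance : Small.{0} Omega1 :=
  Ordinal.small_Iio _

theorem countable_Iio (t : Omega1) : (Iio t).Countable :=
  (Ordinal.countable_Iio_of_lt_ord_aleph_one t.2).preimage Subtype.val_injective

theorem not_countable_univ : ¬ (univ : Set Omega1).Countable := by
  have h := Cardinal.mk_Iio_ordinal (Cardinal.aleph 1).ord
  rw [Cardinal.card_ord] at h
  change Cardinal.mk Omega1 = _ at h
  rw [← Cardinal.le_aleph0_iff_set_countable, Cardinal.mk_univ, h, Cardinal.lift_le_aleph0,
    ← Cardinal.lt_aleph_one_iff]
  exact lt_irrefl _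

end Omega1

universe u w

namespace IsWellFounded

variable {α : Type*} [Small.{w} α] {r : α → α → Prop} [IsWellFounded α r]

variable (r) in
/-- The rank of `a` in `r`, computed on a `w`-small copy of `α` so that it lies in `Ordinal.{w}`. -/
noncomputable def smallRank (a : α) : Ordinal.{w} :=
  rank (InvImage r (equivShrink α).symm) (equivShrink α a)

theorem smallRank_lt_of_rel {a b : α} (h : r a b) : smallRank r a < smallRank r b :=
  rank_lt_of_rel (by simpa [InvImage] using h)

theorem smallRank_le_of_forall {a : α} {o : Ordinal.{w}}
    (h : ∀ b, r b a → smallRank r b < o) : smallRank r a ≤ o := by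
  rw [smallRank, rank_eq]
  refine Ordinal.iSup_le fun b => Order.succ_le_of_lt ?_
  have := h _ (by simpa [InvImage] using b.2)
  rwa [smallRank, Equiv.apply_symm_apply] at this

theorem exists_rel_smallRank_eq [IsTrans α r] {a : α} {o : Ordinal.{w}}
    (h : o < smallRank r a) : ∃ b, r b a ∧ smallRank r b = o := by
  induction a using IsWellFounded.induction r with
  | _ a ih =>
    rw [smallRank, rank_eq, Ordinal.lt_iSup_iff] at h
    obtain ⟨⟨b', hb'⟩, hlt⟩ := h
    set b := (equivShrink α).symm b'
    have hb : r b a := by simpa [InvImage] using hb'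
    have hle : o ≤ smallRank r b := by simpa [smallRank, b, Order.lt_succ_iff] using hlt
    obtain rfl | hlt := hle.eq_or_lt
    · exact ⟨b, hb, rfl⟩
    · obtain ⟨c, hcb, rfl⟩ := ih b hb hlt
      exact ⟨c, _root_.trans hcb hb, rfl⟩

end IsWellFounded

open IsWellFounded in
theorem exists_isSuslinTree_of_isTree (r : Omega1 → Omega1 → Prop)
    (hlt : ∀ s t, r s t → s < t)
    (htrans : ∀ s t u, r s t → r t u → r s u)
    (hpred : ∀ t s s', r s t → r s' t → s = s' ∨ r s s' ∨ r s' s)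
    (hchain : ∀ C : Set Omega1, (∀ x ∈ C, ∀ y ∈ C, x = y ∨ r x y ∨ r y x) → C.Countable)
    (hanti : ∀ A : Set Omega1,
      (∀ x ∈ A, ∀ y ∈ A, x ≠ y → ¬ r x y ∧ ¬ r y x) → A.Countable) :
    ∃ lvl : Omega1 → Ordinal.{u}, IsSuslinTree r lvl := by
  have : IsWellFounded Omega1 r := ⟨Subrelation.wf (hlt _ _) wellFounded_lt⟩
  have : IsTrans Omega1 r := ⟨htrans⟩
  set lvl : Omega1 → Ordinal.{u} := fun t => Ordinal.lift.{u} (smallRank.{0} r t)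
  have lvl_lt_of_rel {s t : Omega1} (h : r s t) : lvl s < lvl t :=
    Ordinal.lift_lt.2 (smallRank_lt_of_rel h)
  have smallRank_le (t : Omega1) : smallRank r t ≤ t.val := by
    induction t using WellFoundedLT.induction with
    | _ t ih => exact smallRank_le_of_forall fun s hs => (ih s (hlt s t hs)).trans_lt (hlt s t hs)
  have lift_ord_aleph_one :
      (Cardinal.aleph.{u} 1).ord = Ordinal.lift.{u} (Cardinal.aleph.{0} 1).ord := by
    rw [Cardinal.lift_ord, Cardinal.lift_aleph, Ordinal.lift_one]
  have hlevel (α : Ordinal.{u}) : {t | lvl t = α}.Countable :=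
    hanti _ fun x hx y hy hne =>
      ⟨fun h => (lvl_lt_of_rel h).ne (hx.trans hy.symm),
        fun h => (lvl_lt_of_rel h).ne (hy.trans hx.symm)⟩
  refine ⟨lvl, fun t h => (hlt t t h).false, htrans, hpred, fun s t => lvl_lt_of_rel,
    fun t β hβ => ?_, hlevel, fun α hα => ?_, fun t => ?_, hchain, hanti⟩
  · obtain ⟨β₀, hβ₀, rfl⟩ := Ordinal.lt_lift_iff.1 hβ
    obtain ⟨s, hs, hsβ⟩ := exists_rel_smallRank_eq hβ₀
    exact ⟨s, hs, congrArg _ hsβ⟩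
  · rw [lift_ord_aleph_one] at hα
    obtain ⟨α₀, hα₀, rfl⟩ := Ordinal.lt_lift_iff.1 hα
    obtain ⟨t, ht⟩ : ∃ t, α₀ ≤ smallRank r t := by
      by_contra! h
      refine Omega1.not_countable_univ
        (((Ordinal.countable_Iio_of_lt_ord_aleph_one hα₀).biUnion
          fun β _ => hlevel (Ordinal.lift β)).mono fun t _ => mem_biUnion (h t) rfl)
    obtain rfl | hlt := ht.eq_or_lt
    · exact ⟨t, rfl⟩
    · obtain ⟨s, -, hs⟩ := exists_rel_smallRank_eq hlt
      exact ⟨s, congrArg _ hs⟩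
  · rw [lift_ord_aleph_one, Ordinal.lift_lt]
    exact (smallRank_le t).trans_lt t.2

def IsCCC (P : Type*) [LinearOrder P] : Prop :=
  ∀ F : Set (Set P), (∀ I ∈ F, ∃ a b : P, a < b ∧ I = Ioo a b ∧ I.Nonempty) →
    F.Pairwise Disjoint → F.Countable

section LinearOrder

variable {P : Type*} [LinearOrder P]

theorem IsCCC.countable_of_pairwise_disjoint (hP : IsCCC P) {ι : Type*} {s : Set ι}
    {l u : ι → P} (hne : ∀ i ∈ s, (Ioo (l i) (u i)).Nonempty)
    (hdisj : s.Pairwise (Disjoint on fun i => Ioo (l i) (u i))) : s.Countable := by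
  have hinj : InjOn (fun i => Ioo (l i) (u i)) s := by
    intro i hi j hj hij
    by_contra hij'
    have := hdisj hi hj hij'
    rw [onFun, show Ioo (l i) (u i) = Ioo (l j) (u j) from hij, disjoint_self,
      bot_eq_empty] at this
    exact (hne j hj).ne_empty this
  refine (mapsTo_image _ s).countable_of_injOn hinj (hP _ ?_ (hinj.pairwise_image.2 hdisj))
  rintro _ ⟨i, hi, rfl⟩
  obtain ⟨x, hx⟩ := hne i hi
  exact ⟨l i, u i, hx.1.trans hx.2, rfl, x, hx⟩

/-- Consecutive values of a well-ordered increasing family span pairwise disjoint intervals. -/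
theorem IsCCC.countable_of_strictMonoOn [DenselyOrdered P] (hP : IsCCC P) {α : Type*}
    [LinearOrder α] [WellFoundedLT α] {s : Set α} {f : α → P} (hf : StrictMonoOn f s) :
    s.Countable := by
  set s' := {x ∈ s | ∃ y ∈ s, x < y}
  have hsucc (x : α) (hx : x ∈ s') : ∃ y ∈ s, x < y ∧ ∀ z ∈ s, x < z → y ≤ z :=
    ⟨wellFounded_lt.min {y ∈ s | x < y} hx.2, (wellFounded_lt.min_mem _ hx.2).1,
      (wellFounded_lt.min_mem _ hx.2).2,
      fun z hz hxz => wellFounded_lt.min_le (s := {y ∈ s | x < y}) ⟨hz, hxz⟩⟩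
  choose! succ hsucc_mem hlt_succ hsucc_le using hsucc
  have hs' : s'.Countable := by
    refine hP.countable_of_pairwise_disjoint (l := f) (u := f ∘ succ)
      (fun x hx => nonempty_Ioo.2 (hf hx.1 (hsucc_mem x hx) (hlt_succ x hx))) ?_
    have key {x y : α} (hx : x ∈ s') (hy : y ∈ s') (hxy : x < y) :
        Disjoint (Ioo (f x) (f (succ x))) (Ioo (f y) (f (succ y))) :=
      disjoint_left.2 fun z hzx hzy =>
        (hzx.2.trans_le (hf.monotoneOn (hsucc_mem x hx) hy.1 (hsucc_le x hx y hy.1 hxy))).not_gt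
          hzy.1
    intro x hx y hy hxy
    rcases hxy.lt_or_gt with h | h
    exacts [key hx hy h, (key hy hx h).symm]
  have hmax : (s \ s').Subsingleton := fun x hx y hy =>
    le_antisymm (not_lt.1 fun h => hy.2 ⟨hy.1, x, hx.1, h⟩)
      (not_lt.1 fun h => hx.2 ⟨hx.1, y, hy.1, h⟩)
  exact (hs'.union hmax.countable).mono fun x hx => (em (x ∈ s')).imp id (⟨hx, ·⟩)

theorem exists_Icc_disjoint_of_not_separable [DenselyOrdered P]
    (hP : ¬ ∃ D : Set P, D.Countable ∧
      ∀ a b : P, a < b → (Ioo a b).Nonempty → ∃ d ∈ D, d ∈ Ioo a b)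
    {E : Set P} (hE : E.Countable) : ∃ u v, u < v ∧ Disjoint (Icc u v) E := by
  push Not at hP
  obtain ⟨a, b, hab, -, hE⟩ := hP E hE
  obtain ⟨u, hau, hub⟩ := exists_between hab
  obtain ⟨v, huv, hvb⟩ := exists_between hub
  exact ⟨u, v, huv, disjoint_left.2 fun x hx hxE => hE x hxE (Icc_subset_Ioo hau hvb hx)⟩

theorem exists_intervals_avoiding_earlier_endpoints {α : Type*} [Preorder α] [WellFoundedLT α]
    (hα : ∀ t : α, (Iio t).Countable)
    (havoid : ∀ E : Set P, E.Countable → ∃ u v, u < v ∧ Disjoint (Icc u v) E) :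
    ∃ a b : α → P, (∀ t, a t < b t) ∧
      ∀ s t, s < t → a s ∉ Icc (a t) (b t) ∧ b s ∉ Icc (a t) (b t) := by
  have : Nonempty P := let ⟨u, _⟩ := havoid ∅ countable_empty; ⟨u⟩
  choose! u v huv hdisj using havoid
  let I : α → P × P := wellFounded_lt.fix fun t I =>
    (u (⋃ s : Iio t, {(I s s.2).1, (I s s.2).2}), v (⋃ s : Iio t, {(I s s.2).1, (I s s.2).2}))
  set E : α → Set P := fun t => ⋃ s : Iio t, {(I s).1, (I s).2}
  have hI (t : α) : I t = (u (E t), v (E t)) := wellFounded_lt.fix_eq _ t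
  have hE (t : α) : (E t).Countable :=
    have := (hα t).to_subtype
    countable_iUnion fun _ => (toFinite _).countable
  refine ⟨fun t => (I t).1, fun t => (I t).2, fun t => by simpa [hI] using huv _ (hE t),
    fun s t hst => ⟨fun h => ?_, fun h => ?_⟩⟩ <;>
  · have hdisjt : Disjoint (Icc (I t).1 (I t).2) (E t) := by rw [hI t]; exact hdisj _ (hE t)
    refine disjoint_left.1 hdisjt h (mem_iUnion.2 ⟨⟨s, hst⟩, ?_⟩)
    simp

section IntervalPrec

variable {α : Type*} [LinearOrder α]

variable (a b : α → P) in
def IntervalPrec (s t : α) : Prop :=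
  s < t ∧ a s < a t ∧ b t < b s

variable {a b : α → P} {s t : α}

theorem IntervalPrec.trans {u : α} (hst : IntervalPrec a b s t) (htu : IntervalPrec a b t u) :
    IntervalPrec a b s u :=
  ⟨hst.1.trans htu.1, hst.2.1.trans htu.2.1, htu.2.2.trans hst.2.2⟩

theorem IntervalPrec.Ioo_subset (h : IntervalPrec a b s t) : Ioo (a t) (b t) ⊆ Ioo (a s) (b s) :=
  Ioo_subset_Ioo h.2.1.le h.2.2.le

section Avoiding

variable (havoid : ∀ s t, s < t → a s ∉ Icc (a t) (b t) ∧ b s ∉ Icc (a t) (b t))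
include havoid

theorem intervalPrec_of_lt_of_mem (hst : s < t) {x : P} (hxs : x ∈ Ioo (a s) (b s))
    (hxt : x ∈ Ioo (a t) (b t)) : IntervalPrec a b s t :=
  ⟨hst, lt_of_not_ge fun h => (havoid s t hst).1 ⟨h, (hxs.1.trans hxt.2).le⟩,
    lt_of_not_ge fun h => (havoid s t hst).2 ⟨(hxt.1.trans hxs.2).le, h⟩⟩

theorem intervalPrec_or_of_ne_of_mem (hst : s ≠ t) {x : P} (hxs : x ∈ Ioo (a s) (b s))
    (hxt : x ∈ Ioo (a t) (b t)) : IntervalPrec a b s t ∨ IntervalPrec a b t s :=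
  hst.lt_or_gt.imp (intervalPrec_of_lt_of_mem havoid · hxs hxt)
    (intervalPrec_of_lt_of_mem havoid · hxt hxs)

variable [DenselyOrdered P] (hab : ∀ t, a t < b t)
include hab

theorem IntervalPrec.eq_or_intervalPrec_or_intervalPrec {s' : α} (hs : IntervalPrec a b s t)
    (hs' : IntervalPrec a b s' t) : s = s' ∨ IntervalPrec a b s s' ∨ IntervalPrec a b s' s := by
  obtain ⟨x, hx⟩ := nonempty_Ioo.2 (hab t)
  exact or_iff_not_imp_left.2 fun hne =>
    intervalPrec_or_of_ne_of_mem havoid hne (hs.Ioo_subset hx) (hs'.Ioo_subset hx)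

theorem IsCCC.countable_of_intervalPrec_antichain (hP : IsCCC P) {A : Set α}
    (hA : ∀ x ∈ A, ∀ y ∈ A, x ≠ y → ¬ IntervalPrec a b x y ∧ ¬ IntervalPrec a b y x) :
    A.Countable :=
  hP.countable_of_pairwise_disjoint (fun t _ => nonempty_Ioo.2 (hab t))
    fun x hx y hy hxy => disjoint_left.2 fun _ hzx hzy =>
      (intervalPrec_or_of_ne_of_mem havoid hxy hzx hzy).elim (hA x hx y hy hxy).1
        (hA x hx y hy hxy).2

end Avoiding

theorem IsCCC.countable_of_intervalPrec_chain [DenselyOrdered P] [WellFoundedLT α] (hP : IsCCC P)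
    {C : Set α} (hC : ∀ x ∈ C, ∀ y ∈ C, x = y ∨ IntervalPrec a b x y ∨ IntervalPrec a b y x) :
    C.Countable := by
  refine hP.countable_of_strictMonoOn (f := a) fun x hx y hy hxy => ?_
  rcases hC x hx y hy with rfl | h | h
  exacts [absurd hxy (lt_irrefl x), h.2.1, absurd h.1 hxy.not_gt]

end IntervalPrec

end LinearOrder

theorem suslin_tree_of_wellordered_separating_family_general
    {P : Type*} [LinearOrder P]
    -- density
    (hdense : ∀ a b : P, a < b → ∃ c, a < c ∧ c < b)
    -- nonseparability
    (hnonsep : ¬ ∃ D : Set P, D.Countable ∧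
      ∀ a b : P, a < b → (Set.Ioo a b).Nonempty → ∃ d ∈ D, d ∈ Set.Ioo a b)
    -- countable chain condition
    (hccc : ∀ F : Set (Set P),
      (∀ I ∈ F, ∃ a b : P, a < b ∧ I = Set.Ioo a b ∧ I.Nonempty) →
      F.Pairwise Disjoint → F.Countable) :
    ∃ (prec : Omega1 → Omega1 → Prop) (lvl : Omega1 → Ordinal),
      IsSuslinTree prec lvl := by
  have : DenselyOrdered P := ⟨hdense⟩
  obtain ⟨a, b, hab, havoid⟩ := exists_intervals_avoiding_earlier_endpoints Omega1.countable_Iio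
    fun _ => exists_Icc_disjoint_of_not_separable hnonsep
  exact ⟨IntervalPrec a b, exists_isSuslinTree_of_isTree _ (fun _ _ h => h.1)
    (fun _ _ _ => IntervalPrec.trans)
    (fun _ _ _ => IntervalPrec.eq_or_intervalPrec_or_intervalPrec havoid hab)
    (fun _ => IsCCC.countable_of_intervalPrec_chain hccc)
    (fun _ => IsCCC.countable_of_intervalPrec_antichain havoid hab hccc)⟩

/-- ZF: If `(P, ≺)` is a complete, dense, nonseparable linear
order without endpoints satisfying the countable chain condition, and `(P, ≺)`
admits a well-ordered separating family, then there is a Suslin tree on `ω₁`. -/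
theorem suslin_tree_of_wellordered_separating_family
    {P : Type*} [LinearOrder P] [Nonempty P] [NoMaxOrder P] [NoMinOrder P]
    -- completeness: every nonempty bounded subset has a supremum and an infimum
    (hsup : ∀ S : Set P, S.Nonempty → BddAbove S → ∃ u, IsLUB S u)
    (hinf : ∀ S : Set P, S.Nonempty → BddBelow S → ∃ u, IsGLB S u)
    -- density
    (hdense : ∀ a b : P, a < b → ∃ c, a < c ∧ c < b)
    -- nonseparability
    (hnonsep : ¬ ∃ D : Set P, D.Countable ∧
      ∀ a b : P, a < b → (Set.Ioo a b).Nonempty → ∃ d ∈ D, d ∈ Set.Ioo a b)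
    -- countable chain condition
    (hccc : ∀ F : Set (Set P),
      (∀ I ∈ F, ∃ a b : P, a < b ∧ I = Set.Ioo a b ∧ I.Nonempty) →
      F.Pairwise Disjoint → F.Countable)
    -- a well-ordered separating family ⟨A i : i ∈ ι⟩
    {ι : Type*} [LinearOrder ι] [WellFoundedLT ι] (A : ι → Set P)
    (hdc : ∀ i, ∀ x y : P, x ≤ y → y ∈ A i → x ∈ A i)
    (hsep : ∀ x y : P, x < y → ∃ i, x ∈ A i ∧ y ∉ A i) :
    ∃ (prec : Omega1 → Omega1 → Prop) (lvl : Omega1 → Ordinal),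
      IsSuslinTree prec lvl :=
  suslin_tree_of_wellordered_separating_family_general hdense hnonsep hccc
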